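/- Let (Ω, ℱ, P) carry a treatment A with levels 0 and a, a covariate L taking values in a countable set, nonnegative potential outcomes T^0, T^a, and a factual outcome T with T = T^a on {A = a} and T = T^0 on {A = 0} (consistency). Fix ℓ with P(L = ℓ, A = a) > 0 and P(L = ℓ, A = 0) > 0, and assume conditional exchangeability given L: for every t ≥ 0 and b ∈ {0, a}, P(T^b > t | L = ℓ, A = b) = P(T^b > t | L = ℓ). Then for every t ≥ 0 and b ∈ {0, a}, P(T > t | L = ℓ, A = b) = P(T^b > t | L = ℓ); consequently, for every t > 0, (1/t)·sup{s : P(T > s | L = ℓ, A = 0) ≥ P(T > t | L = ℓ, A = a)} = (1/t)·sup{s : P(T^0 > s | L = ℓ) ≥ P(T^a > t | L = ℓ)}, i.e., the conditional observed acceleration factor equals the conditional causal acceleration factor given L = ℓ. -/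

import Mathlib

/-!
On `{L = ℓ, A = b}` consistency makes the factual outcome `T` coincide with the potential
outcome `T^b`, so conditioning on that event cannot tell them apart; exchangeability then
replaces the conditioning event `{L = ℓ, A = b}` by `{L = ℓ}`. The acceleration factor depends
on the two survival functions only through their values on `[0, ∞)`, where they now agree.
-/

open MeasureTheory ProbabilityTheory Set

open scoped ENNReal

noncomputable def survivalInv (S : ℝ → ℝ≥0∞) (p : ℝ≥0∞) : ℝ :=
  sSup {s : ℝ | 0 ≤ s ∧ p ≤ S s}

theorem survivalInv_congr {S S' : ℝ → ℝ≥0∞} (h : EqOn S S' (Ici 0)) (p : ℝ≥0∞) :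
    survivalInv S p = survivalInv S' p := by
  unfold survivalInv
  congr 1
  ext s
  exact and_congr_right fun hs => by rw [h hs]

theorem cond_preimage_congr_of_eqOn {Ω β : Type*} [MeasurableSpace Ω] (μ : Measure Ω)
    {s : Set Ω} (hs : MeasurableSet s) {X Y : Ω → β} (h : EqOn X Y s) (B : Set β) :
    μ[X ⁻¹' B | s] = μ[Y ⁻¹' B | s] := by
  rw [← cond_inter_self hs, ← cond_inter_self hs (Y ⁻¹' B), h.inter_preimage_eq]

theorem conditional_acceleration_factor_identification_general
    {Ω : Type*} [MeasurableSpace Ω] (P : Measure Ω)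
    {γ : Type*} [MeasurableSpace γ] [MeasurableSingletonClass γ]
    (A T T0 Ta : Ω → ℝ) (L : Ω → γ) (a : ℝ)
    (hA : Measurable A)
    (hL : Measurable L)
    (hconsa : ∀ ω, A ω = a → T ω = Ta ω)
    (hcons0 : ∀ ω, A ω = 0 → T ω = T0 ω)
    (ℓ : γ)
    (hexcha : ∀ t : ℝ, 0 ≤ t →
      (P[|{ω | L ω = ℓ ∧ A ω = a}]) {ω | t < Ta ω} = (P[|{ω | L ω = ℓ}]) {ω | t < Ta ω})
    (hexch0 : ∀ t : ℝ, 0 ≤ t →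
      (P[|{ω | L ω = ℓ ∧ A ω = 0}]) {ω | t < T0 ω} = (P[|{ω | L ω = ℓ}]) {ω | t < T0 ω}) :
    (∀ t : ℝ, 0 ≤ t →
      (P[|{ω | L ω = ℓ ∧ A ω = a}]) {ω | t < T ω} = (P[|{ω | L ω = ℓ}]) {ω | t < Ta ω} ∧
      (P[|{ω | L ω = ℓ ∧ A ω = 0}]) {ω | t < T ω} = (P[|{ω | L ω = ℓ}]) {ω | t < T0 ω}) ∧
    (∀ t : ℝ, 0 < t →
      (1 / t) * sSup {s : ℝ | 0 ≤ s ∧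
          (P[|{ω | L ω = ℓ ∧ A ω = a}]) {ω | t < T ω}
            ≤ (P[|{ω | L ω = ℓ ∧ A ω = 0}]) {ω | s < T ω}}
        = (1 / t) * sSup {s : ℝ | 0 ≤ s ∧
            (P[|{ω | L ω = ℓ}]) {ω | t < Ta ω} ≤ (P[|{ω | L ω = ℓ}]) {ω | s < T0 ω}}) := by
  have hS : ∀ b, MeasurableSet {ω | L ω = ℓ ∧ A ω = b} := fun b =>
    (hL (measurableSet_singleton ℓ)).inter (hA (measurableSet_singleton b))
  have identified : ∀ t : ℝ, 0 ≤ t →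
      (P[|{ω | L ω = ℓ ∧ A ω = a}]) {ω | t < T ω} = (P[|{ω | L ω = ℓ}]) {ω | t < Ta ω} ∧
      (P[|{ω | L ω = ℓ ∧ A ω = 0}]) {ω | t < T ω} = (P[|{ω | L ω = ℓ}]) {ω | t < T0 ω} :=
    fun t ht =>
      ⟨(cond_preimage_congr_of_eqOn P (hS a) (fun ω hω => hconsa ω hω.2) (Ioi t)).trans
          (hexcha t ht),
        (cond_preimage_congr_of_eqOn P (hS 0) (fun ω hω => hcons0 ω hω.2) (Ioi t)).trans
          (hexch0 t ht)⟩
  refine ⟨identified, fun t ht => ?_⟩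
  change (1 / t) * survivalInv _ _ = (1 / t) * survivalInv _ _
  rw [(identified t ht.le).1, survivalInv_congr fun s hs => (identified s hs).2]

/-- Section 4 extension of Theorem 1 to observational data: under consistency and conditional
exchangeability given a measured covariate `L`, the conditional observational survival
functions identify the conditional potential-outcome survival functions, and hence the
conditional observed acceleration factor equals the conditional causal acceleration factor
given `L = ℓ`. -/
theorem conditional_acceleration_factor_identification
    {Ω : Type*} [MeasurableSpace Ω] (P : Measure Ω) [IsProbabilityMeasure P]
    {γ : Type*} [MeasurableSpace γ] [Countable γ] [MeasurableSingletonClass γ]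
    (A T T0 Ta : Ω → ℝ) (L : Ω → γ) (a : ℝ)
    (hA : Measurable A) (hT : Measurable T) (hT0 : Measurable T0) (hTa : Measurable Ta)
    (hL : Measurable L)
    (hT0nn : ∀ ω, 0 ≤ T0 ω) (hTann : ∀ ω, 0 ≤ Ta ω)
    (hconsa : ∀ ω, A ω = a → T ω = Ta ω)
    (hcons0 : ∀ ω, A ω = 0 → T ω = T0 ω)
    (ℓ : γ)
    (hpa : 0 < P {ω | L ω = ℓ ∧ A ω = a}) (hp0 : 0 < P {ω | L ω = ℓ ∧ A ω = 0})
    (hexcha : ∀ t : ℝ, 0 ≤ t →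
      (P[|{ω | L ω = ℓ ∧ A ω = a}]) {ω | t < Ta ω} = (P[|{ω | L ω = ℓ}]) {ω | t < Ta ω})
    (hexch0 : ∀ t : ℝ, 0 ≤ t →
      (P[|{ω | L ω = ℓ ∧ A ω = 0}]) {ω | t < T0 ω} = (P[|{ω | L ω = ℓ}]) {ω | t < T0 ω}) :
    (∀ t : ℝ, 0 ≤ t →
      (P[|{ω | L ω = ℓ ∧ A ω = a}]) {ω | t < T ω} = (P[|{ω | L ω = ℓ}]) {ω | t < Ta ω} ∧
      (P[|{ω | L ω = ℓ ∧ A ω = 0}]) {ω | t < T ω} = (P[|{ω | L ω = ℓ}]) {ω | t < T0 ω}) ∧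
    (∀ t : ℝ, 0 < t →
      (1 / t) * sSup {s : ℝ | 0 ≤ s ∧
          (P[|{ω | L ω = ℓ ∧ A ω = a}]) {ω | t < T ω}
            ≤ (P[|{ω | L ω = ℓ ∧ A ω = 0}]) {ω | s < T ω}}
        = (1 / t) * sSup {s : ℝ | 0 ≤ s ∧
            (P[|{ω | L ω = ℓ}]) {ω | t < Ta ω} ≤ (P[|{ω | L ω = ℓ}]) {ω | s < T0 ω}}) :=
  conditional_acceleration_factor_identification_general P A T T0 Ta L a hA hL hconsa hcons0 ℓ
    hexcha hexch0
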